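/- arXiv:0905.1779 — 2 statements merged into one kernel-verified Lean document; each statement's English description precedes it below -/
import Mathlib

section
/- For any partition λ and positive integer M, the number of cells of the Young diagram of λ whose hook length is divisible by M equals the total size of the M-quotient of λ, i.e., |μ_0| + |μ_1| + ⋯ + |μ_{M-1}|. -/
open Finset PowerSeries

/-- The hook length of a cell `c` of a Young diagram. -/
def hookLen (Y : YoungDiagram) (c : ℕ × ℕ) : ℕ :=
  (Y.rowLen c.1 - c.2) + (Y.colLen c.2 - c.1) - 1

/-- The Maya diagram (set of beta-numbers) of a Young diagram:
`{rowLen i - i - 1 : i ∈ ℕ} ⊆ ℤ`. -/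
def mayaOf (Y : YoungDiagram) : Set ℤ :=
  Set.range fun i : ℕ => (Y.rowLen i : ℤ) - i - 1

/-- The number of elements of `T` lying strictly above `t`. -/
noncomputable def countAbove (T : Set ℤ) (t : ℤ) : ℕ :=
  {u : ℤ | u ∈ T ∧ t < u}.ncard

/-- The `i`-th part (0-indexed) of the partition associated to a Maya diagram `T`. -/
noncomputable def mayaPart (T : Set ℤ) (i : ℕ) : ℕ :=
  {t : ℤ | t ∉ T ∧ i + 1 ≤ countAbove T t}.ncard

/-- The `j`-th runner of the Maya diagram of `Y` on an `M`-runner abacus. -/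
def runner (M : ℕ) (Y : YoungDiagram) (j : ℕ) : Set ℤ :=
  {q : ℤ | (M : ℤ) * q + (j : ℤ) ∈ mayaOf Y}

/-- The parts of the `j`-th partition in the `M`-quotient of `Y`. -/
noncomputable def quotientPart (M : ℕ) (Y : YoungDiagram) (j : ℕ) : ℕ → ℕ :=
  mayaPart (runner M Y j)

/-- The size of the `j`-th partition of the `M`-quotient of `Y`. -/
noncomputable def quotientSize (M : ℕ) (Y : YoungDiagram) (j : ℕ) : ℕ :=
  {c : ℕ × ℕ | c.2 < quotientPart M Y j c.1}.ncard

/-- The charge of a Maya diagram. -/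
noncomputable def charge (T : Set ℤ) : ℤ :=
  ({t : ℤ | t ∈ T ∧ 0 ≤ t}.ncard : ℤ) - ({t : ℤ | t ∉ T ∧ t < 0}.ncard : ℤ)

/-- The Maya diagram of the `M`-core of `Y`: push all beads down on each runner. -/
def coreMaya (M : ℕ) (Y : YoungDiagram) : Set ℤ :=
  {z : ℤ | Int.ediv z M < charge (runner M Y (Int.emod z M).toNat)}

/-- The parts of the `M`-core of `Y`. -/
noncomputable def corePart (M : ℕ) (Y : YoungDiagram) : ℕ → ℕ :=
  mayaPart (coreMaya M Y)

-- beads and gaps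
def bead (Y : YoungDiagram) (i : ℕ) : ℤ := (Y.rowLen i : ℤ) - i - 1
def gap (Y : YoungDiagram) (c : ℕ) : ℤ := (c : ℤ) - Y.colLen c

lemma bead_strictAnti (Y : YoungDiagram) : StrictAnti (bead Y) := by
  apply strictAnti_nat_of_succ_lt
  intro i
  have h := Y.rowLen_anti i (i+1) (by omega)
  simp only [bead]
  push_cast
  omega

lemma gap_strictMono (Y : YoungDiagram) : StrictMono (gap Y) := by
  apply strictMono_nat_of_lt_succ
  intro c
  have h := Y.colLen_anti c (c+1) (by omega)
  simp only [gap]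
  push_cast
  omega

lemma gap_lt_bead_iff (Y : YoungDiagram) (i c : ℕ) :
    gap Y c < bead Y i ↔ c < Y.rowLen i := by
  constructor
  · intro h
    by_contra hc
    push_neg at hc
    have h1 : (i, c) ∉ Y := by rw [YoungDiagram.mem_iff_lt_rowLen]; omega
    rw [YoungDiagram.mem_iff_lt_colLen] at h1
    push_neg at h1
    simp only [gap, bead] at h
    have : (Y.colLen c : ℤ) ≤ i := by exact_mod_cast h1
    have : (Y.rowLen i : ℤ) ≤ c := by exact_mod_cast hc
    omega
  · intro h
    have h1 : (i, c) ∈ Y := by rw [YoungDiagram.mem_iff_lt_rowLen]; omega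
    rw [YoungDiagram.mem_iff_lt_colLen] at h1
    simp only [gap, bead]
    have : (i : ℤ) < Y.colLen c := by exact_mod_cast h1
    have : (c : ℤ) < Y.rowLen i := by exact_mod_cast h
    omega

lemma mem_mayaOf_iff (Y : YoungDiagram) (z : ℤ) :
    z ∈ mayaOf Y ↔ z ∉ Set.range (gap Y) := by
  constructor
  · rintro ⟨i, rfl⟩ ⟨c, hc⟩
    -- bead i = gap c : contradiction
    have hb : bead Y i = gap Y c := hc.symm
    rcases lt_or_ge c (Y.rowLen i) with h | h
    · have := (gap_lt_bead_iff Y i c).2 h; omega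
    · have : ¬ (gap Y c < bead Y i) := by rw [gap_lt_bead_iff]; omega
      -- need gap c ≠ bead i still; from h, show bead i < gap c
      have h1 : (i, c) ∉ Y := by rw [YoungDiagram.mem_iff_lt_rowLen]; omega
      rw [YoungDiagram.mem_iff_lt_colLen] at h1
      push_neg at h1
      simp only [gap, bead] at hb
      have h2 : (Y.colLen c : ℤ) ≤ i := by exact_mod_cast h1
      have h3 : (Y.rowLen i : ℤ) ≤ c := by exact_mod_cast h
      omega
  · intro hz
    by_contra hm
    -- z not a bead and not a gap
    apply hz
    rcases lt_or_ge (bead Y 0) z with h0 | h0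
    · -- z ≥ rowLen 0, take c = z.toNat
      have hz0 : 0 ≤ z := by
        simp only [bead] at h0; omega
      have hzr : (Y.rowLen 0 : ℤ) ≤ z := by simp only [bead] at h0; omega
      refine ⟨z.toNat, ?_⟩
      have hcol : Y.colLen z.toNat = 0 := by
        by_contra hc
        have : (0, z.toNat) ∈ Y := by
          rw [YoungDiagram.mem_iff_lt_colLen]; omega
        rw [YoungDiagram.mem_iff_lt_rowLen] at this
        omega
      simp [gap, hcol]; omega
    · -- z ≤ bead 0, find i with bead (i+1) < z < bead i or z = some bead
      have hex : ∃ i, bead Y i < z := by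
        refine ⟨(Y.rowLen 0 + z.natAbs + 1), ?_⟩
        have := Y.rowLen_anti 0 (Y.rowLen 0 + z.natAbs + 1) (by omega)
        simp only [bead]
        omega
      classical
      let i := Nat.find hex
      have hi : bead Y i < z := Nat.find_spec hex
      have hi0 : i ≠ 0 := by
        intro h
        have : bead Y i = bead Y 0 := by rw [h]
        have hzne : z ≠ bead Y 0 := by
          intro he; exact hm ⟨0, he.symm⟩
        omega
      obtain ⟨k, hk⟩ : ∃ k, i = k + 1 := ⟨i - 1, by omega⟩
      have hk1 : ¬ bead Y k < z := Nat.find_min hex (by omega)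
      have hkne : z ≠ bead Y k := fun he => hm ⟨k, he.symm⟩
      have hklt : z < bead Y k := by omega
      have hbk1 : bead Y (k+1) < z := by rw [hk] at hi; exact hi
      -- c := z + k + 1
      have hc0 : (0:ℤ) ≤ z + k + 1 := by
        simp only [bead] at hbk1
        push_cast at hbk1
        omega
      set c := (z + k + 1).toNat with hcdef
      have hcz : (c : ℤ) = z + k + 1 := Int.toNat_of_nonneg hc0
      have hcu : c < Y.rowLen k := by
        simp only [bead] at hklt
        omega
      have hcl : Y.rowLen (k+1) ≤ c := by
        simp only [bead] at hbk1
        push_cast at hbk1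
        omega
      have hmem : (k, c) ∈ Y := by rw [YoungDiagram.mem_iff_lt_rowLen]; omega
      have hnmem : (k+1, c) ∉ Y := by rw [YoungDiagram.mem_iff_lt_rowLen]; omega
      rw [YoungDiagram.mem_iff_lt_colLen] at hmem
      rw [YoungDiagram.mem_iff_lt_colLen] at hnmem
      have hcol : Y.colLen c = k + 1 := by omega
      exact ⟨c, by simp [gap, hcol]; omega⟩

lemma part_set_finite (T : Set ℤ)
    (hA : ∀ t : ℤ, {u : ℤ | u ∈ T ∧ t < u}.Finite)
    (hB : ∀ t : ℤ, {s : ℤ | s ∉ T ∧ s < t}.Finite) (i : ℕ) :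
    {t : ℤ | t ∉ T ∧ i + 1 ≤ countAbove T t}.Finite := by
  classical
  obtain ⟨B0, hB0⟩ := ((hA 0).bddAbove)
  refine (hB (max B0 0 + 1)).subset ?_
  rintro s ⟨hs, hcnt⟩
  refine ⟨hs, ?_⟩
  have hne : {u : ℤ | u ∈ T ∧ s < u}.Nonempty := by
    rw [← Set.ncard_pos (hA s)]
    unfold countAbove at hcnt
    omega
  obtain ⟨u, hu, hsu⟩ := hne
  rcases le_or_gt u 0 with h | h
  · omega
  · have : u ≤ B0 := hB0 ⟨hu, h⟩
    omega

lemma pairs_ncard_eq (T : Set ℤ)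
    (hA : ∀ t : ℤ, {u : ℤ | u ∈ T ∧ t < u}.Finite)
    (hB : ∀ t : ℤ, {s : ℤ | s ∉ T ∧ s < t}.Finite) :
    {p : ℤ × ℤ | p.1 ∈ T ∧ p.2 ∉ T ∧ p.2 < p.1}.ncard
      = {c : ℕ × ℕ | c.2 < mayaPart T c.1}.ncard := by
  classical
  have hcard : ∀ s : ℤ, (hA s).toFinset.card = countAbove T s := fun s =>
    (Set.ncard_eq_toFinset_card _ (hA s)).symm
  have hD := part_set_finite T hA hB
  have hDcard : ∀ i : ℕ, (hD i).toFinset.card = mayaPart T i := fun i =>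
    (Set.ncard_eq_toFinset_card _ (hD i)).symm
  set F : ℤ × ℕ → ℤ × ℤ := fun p =>
    (if h : p.2 < countAbove T p.1 then
      (((hA p.1).toFinset.orderIsoOfFin (hcard p.1)) ⟨p.2, h⟩ : ℤ) else 0, p.1) with hF
  set G : ℕ × ℕ → ℤ × ℕ := fun c =>
    (if h : c.2 < mayaPart T c.1 then
      (((hD c.1).toFinset.orderIsoOfFin (hDcard c.1)) ⟨c.2, h⟩ : ℤ) else 0, c.1) with hG
  set Q : Set (ℤ × ℕ) := {p | p.1 ∉ T ∧ p.2 < countAbove T p.1} with hQ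
  have stepA : {p : ℤ × ℤ | p.1 ∈ T ∧ p.2 ∉ T ∧ p.2 < p.1} = F '' Q := by
    ext ⟨t, s⟩
    simp only [Set.mem_setOf_eq, Set.mem_image]
    constructor
    · rintro ⟨ht, hs, hst⟩
      have htm : t ∈ (hA s).toFinset := by
        rw [Set.Finite.mem_toFinset]; exact ⟨ht, hst⟩
      obtain ⟨k, hk⟩ := ((hA s).toFinset.orderIsoOfFin (hcard s)).surjective ⟨t, htm⟩
      refine ⟨(s, k.val), ⟨hs, k.isLt⟩, ?_⟩
      simp only [hF, dif_pos k.isLt]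
      have : (⟨k.val, k.isLt⟩ : Fin (countAbove T s)) = k := rfl
      rw [this, hk]
    · rintro ⟨⟨s', k⟩, ⟨hs', hk⟩, heq⟩
      simp only [hF, dif_pos hk] at heq
      have h2 : s' = s := congrArg Prod.snd heq
      have h1 : (((hA s').toFinset.orderIsoOfFin (hcard s')) ⟨k, hk⟩ : ℤ) = t :=
        congrArg Prod.fst heq
      have hm := (((hA s').toFinset.orderIsoOfFin (hcard s')) ⟨k, hk⟩).2
      rw [Set.Finite.mem_toFinset] at hm
      rw [h1] at hm
      subst h2
      exact ⟨hm.1, hs', hm.2⟩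
  have hFinj : Set.InjOn F Q := by
    rintro ⟨s, k⟩ ⟨hs, hk⟩ ⟨s', k'⟩ ⟨hs', hk'⟩ heq
    have h2 : s = s' := congrArg Prod.snd heq
    subst h2
    simp only [hF, dif_pos hk, dif_pos hk', Prod.mk.injEq] at heq
    have h3 := ((hA s).toFinset.orderIsoOfFin (hcard s)).injective (Subtype.ext heq.1)
    have h4 : k = k' := congrArg Fin.val h3
    rw [h4]
  set C : Set (ℕ × ℕ) := {c | c.2 < mayaPart T c.1} with hC
  have stepB : Q = G '' C := by
    ext ⟨s, k⟩
    simp only [hQ, hC, Set.mem_setOf_eq, Set.mem_image]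
    constructor
    · rintro ⟨hs, hk⟩
      have hsm : s ∈ (hD k).toFinset := by
        rw [Set.Finite.mem_toFinset]; exact ⟨hs, hk⟩
      obtain ⟨c, hc⟩ := ((hD k).toFinset.orderIsoOfFin (hDcard k)).surjective ⟨s, hsm⟩
      refine ⟨(k, c.val), c.isLt, ?_⟩
      simp only [hG, dif_pos c.isLt]
      have : (⟨c.val, c.isLt⟩ : Fin (mayaPart T k)) = c := rfl
      rw [this, hc]
    · rintro ⟨⟨i, c⟩, hc, heq⟩
      replace hc : c < mayaPart T i := hc
      simp only [hG, dif_pos hc] at heq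
      have h2 : i = k := congrArg Prod.snd heq
      have h1 : (((hD i).toFinset.orderIsoOfFin (hDcard i)) ⟨c, hc⟩ : ℤ) = s :=
        congrArg Prod.fst heq
      have hm := (((hD i).toFinset.orderIsoOfFin (hDcard i)) ⟨c, hc⟩).2
      rw [Set.Finite.mem_toFinset] at hm
      rw [h1] at hm
      subst h2
      exact ⟨hm.1, hm.2⟩
  have hGinj : Set.InjOn G C := by
    rintro ⟨i, c⟩ hic ⟨i', c'⟩ hic' heq
    replace hic : c < mayaPart T i := hic
    replace hic' : c' < mayaPart T i' := hic'
    have h2 : i = i' := congrArg Prod.snd heq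
    subst h2
    simp only [hG, dif_pos hic, dif_pos hic', Prod.mk.injEq] at heq
    have h3 := ((hD i).toFinset.orderIsoOfFin (hDcard i)).injective (Subtype.ext heq.1)
    have h4 : c = c' := congrArg Fin.val h3
    rw [h4]
  rw [stepA, Set.ncard_image_of_injOn hFinj, stepB, Set.ncard_image_of_injOn hGinj]

lemma maya_above_finite (Y : YoungDiagram) (t : ℤ) :
    {u : ℤ | u ∈ mayaOf Y ∧ t < u}.Finite := by
  have hsub : {u : ℤ | u ∈ mayaOf Y ∧ t < u}
      ⊆ bead Y '' (Set.Iio ((Y.rowLen 0 : ℤ) - t).toNat) := by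
    rintro u ⟨⟨i, rfl⟩, hu⟩
    refine ⟨i, ?_, rfl⟩
    have := Y.rowLen_anti 0 i (Nat.zero_le i)
    simp only [Set.mem_Iio] at *
    omega
  exact ((Set.finite_Iio _).image _).subset hsub

lemma maya_below_compl_finite (Y : YoungDiagram) (t : ℤ) :
    {s : ℤ | s ∉ mayaOf Y ∧ s < t}.Finite := by
  have hsub : {s : ℤ | s ∉ mayaOf Y ∧ s < t}
      ⊆ gap Y '' (Set.Iio (t + Y.colLen 0).toNat) := by
    rintro s ⟨hs, hst⟩
    have hr : s ∈ Set.range (gap Y) := by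
      by_contra h; exact hs ((mem_mayaOf_iff Y s).2 h)
    obtain ⟨c, rfl⟩ := hr
    refine ⟨c, ?_, rfl⟩
    have := Y.colLen_anti 0 c (Nat.zero_le c)
    simp only [Set.mem_Iio, gap] at *
    omega
  exact ((Set.finite_Iio _).image _).subset hsub

lemma runner_above_finite (M : ℕ) (hM : 0 < M) (Y : YoungDiagram) (j : ℕ) (t : ℤ) :
    {q : ℤ | q ∈ runner M Y j ∧ t < q}.Finite := by
  have hM1 : (1:ℤ) ≤ M := by exact_mod_cast hM
  have hinj : Function.Injective (fun q : ℤ => (M:ℤ) * q + j) := by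
    intro a b hab
    simp only at hab
    have : (M:ℤ) * a = M * b := by omega
    exact mul_left_cancel₀ (by omega) this
  have hfin := Set.Finite.preimage (f := fun q : ℤ => (M:ℤ) * q + j)
    (hinj.injOn) (maya_above_finite Y ((M:ℤ) * t + j))
  refine hfin.subset ?_
  rintro q ⟨hq, hqt⟩
  have h1 : (M:ℤ) * (t + 1) ≤ M * q := by
    apply mul_le_mul_of_nonneg_left (by omega) (by omega)
  refine ⟨hq, ?_⟩
  simp only [Set.mem_setOf_eq]
  nlinarith

lemma runner_below_compl_finite (M : ℕ) (hM : 0 < M) (Y : YoungDiagram) (j : ℕ) (t : ℤ) :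
    {q : ℤ | q ∉ runner M Y j ∧ q < t}.Finite := by
  have hM1 : (1:ℤ) ≤ M := by exact_mod_cast hM
  have hinj : Function.Injective (fun q : ℤ => (M:ℤ) * q + j) := by
    intro a b hab
    simp only at hab
    have : (M:ℤ) * a = M * b := by omega
    exact mul_left_cancel₀ (by omega) this
  have hfin := Set.Finite.preimage (f := fun q : ℤ => (M:ℤ) * q + j)
    (hinj.injOn) (maya_below_compl_finite Y ((M:ℤ) * t + j))
  refine hfin.subset ?_
  rintro q ⟨hq, hqt⟩
  have h1 : (M:ℤ) * q < M * t := by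
    apply mul_lt_mul_of_pos_left hqt (by omega)
  exact ⟨hq, by simp only [Set.mem_setOf_eq]; omega⟩

lemma pairs_finite (T : Set ℤ)
    (hA : ∀ t : ℤ, {u : ℤ | u ∈ T ∧ t < u}.Finite)
    (hB : ∀ t : ℤ, {s : ℤ | s ∉ T ∧ s < t}.Finite) :
    {p : ℤ × ℤ | p.1 ∈ T ∧ p.2 ∉ T ∧ p.2 < p.1}.Finite := by
  obtain ⟨m0, hm0⟩ := (hB 0).bddBelow
  set m : ℤ := min m0 0 - 1 with hm
  obtain ⟨B, hBmax⟩ := (hA m).bddAbove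
  refine ((hA m).prod (hB (B + 1))).subset ?_
  rintro ⟨q, q'⟩ ⟨hq, hq', hlt⟩
  have hq'm : m < q' := by
    rcases lt_or_ge q' 0 with h | h
    · have := hm0 (Set.mem_setOf_eq ▸ ⟨hq', h⟩ : q' ∈ {s : ℤ | s ∉ T ∧ s < 0})
      omega
    · omega
  have h1 : m < q := lt_trans hq'm hlt
  have h2 : q ≤ B := hBmax ⟨hq, h1⟩
  exact ⟨⟨hq, h1⟩, ⟨hq', by omega⟩⟩

lemma ncard_sigma {α : Type*} (f : ℕ → Set α) (hf : ∀ j, (f j).Finite) (M : ℕ) :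
    (⋃ j ∈ Finset.range M, (fun x => (j, x)) '' f j : Set (ℕ × α)).ncard
      = ∑ j ∈ Finset.range M, (f j).ncard := by
  induction M with
  | zero => simp
  | succ n ih =>
    have hfin : (⋃ j ∈ Finset.range n, (fun x => (j, x)) '' f j : Set (ℕ × α)).Finite := by
      rw [← Finset.set_biUnion_coe]
      exact Set.Finite.biUnion (Finset.range n).finite_toSet fun j _ => ((hf j).image _)
    have hsplit : (⋃ j ∈ Finset.range (n+1), (fun x => (j, x)) '' f j : Set (ℕ × α))
        = ((fun x => (n, x)) '' f n) ∪ ⋃ j ∈ Finset.range n, (fun x => (j, x)) '' f j := by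
      rw [Finset.range_add_one, Finset.set_biUnion_insert]
    have hdisj : Disjoint ((fun x => (n, x)) '' f n)
        (⋃ j ∈ Finset.range n, (fun x => (j, x)) '' f j : Set (ℕ × α)) := by
      rw [Set.disjoint_left]
      rintro x ⟨y, _, rfl⟩ hx2
      simp only [Set.mem_iUnion] at hx2
      obtain ⟨j, hj, z, _, hz⟩ := hx2
      have : j = n := congrArg Prod.fst hz
      rw [Finset.mem_range] at hj
      omega
    rw [hsplit, Set.ncard_union_eq hdisj ((hf n).image _) hfin, ih,
      Set.ncard_image_of_injOn (fun a _ b _ h => congrArg Prod.snd h),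
      Finset.sum_range_succ, Nat.add_comm]

lemma bead_mem_maya (Y : YoungDiagram) (i : ℕ) : bead Y i ∈ mayaOf Y := ⟨i, rfl⟩

lemma gap_not_mem_maya (Y : YoungDiagram) (c : ℕ) : gap Y c ∉ mayaOf Y :=
  fun h => (mem_mayaOf_iff Y _).1 h ⟨c, rfl⟩

lemma hookLen_int (Y : YoungDiagram) {i c : ℕ} (h : (i, c) ∈ Y) :
    (hookLen Y (i, c) : ℤ) = bead Y i - gap Y c := by
  have h1 : c < Y.rowLen i := YoungDiagram.mem_iff_lt_rowLen.1 h
  have h2 : i < Y.colLen c := YoungDiagram.mem_iff_lt_colLen.1 h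
  simp only [hookLen, bead, gap]
  omega


/-- for any partition (Young diagram) `Y` and `M > 0`, the number of cells
of `Y` whose hook length is divisible by `M` equals the total size
`|μ_0| + ⋯ + |μ_{M-1}|` of the `M`-quotient of `Y`. -/
theorem hooks_divisible_eq_quotient_size (M : ℕ) (hM : 0 < M) (Y : YoungDiagram) :
    (Y.cells.filter fun c => M ∣ hookLen Y c).card
      = ∑ j ∈ Finset.range M, quotientSize M Y j := by
  classical
  have hM1 : (1:ℤ) ≤ M := by exact_mod_cast hM
  set S0 : Set (ℕ × ℕ) := {c | c ∈ Y ∧ M ∣ hookLen Y c} with hS0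
  set S1 : Set (ℤ × ℤ) :=
    {p | p.1 ∈ mayaOf Y ∧ p.2 ∉ mayaOf Y ∧ p.2 < p.1 ∧ (M:ℤ) ∣ p.1 - p.2} with hS1
  set Pset : ℕ → Set (ℤ × ℤ) :=
    fun j => {p | p.1 ∈ runner M Y j ∧ p.2 ∉ runner M Y j ∧ p.2 < p.1} with hPset
  -- LHS as ncard
  have hL : (Y.cells.filter fun c => M ∣ hookLen Y c).card = S0.ncard := by
    rw [← Set.ncard_coe_finset]
    congr 1
    ext c
    simp [hS0, YoungDiagram.mem_cells]
  -- first bijection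
  set F1 : ℕ × ℕ → ℤ × ℤ := fun p => (bead Y p.1, gap Y p.2) with hF1
  have hF1inj : Set.InjOn F1 S0 := by
    rintro ⟨i, c⟩ _ ⟨i', c'⟩ _ heq
    have h1 : bead Y i = bead Y i' := congrArg Prod.fst heq
    have h2 : gap Y c = gap Y c' := congrArg Prod.snd heq
    have := (bead_strictAnti Y).injective h1
    have := (gap_strictMono Y).injective h2
    simp_all
  have him1 : F1 '' S0 = S1 := by
    ext ⟨t, s⟩
    simp only [hS0, hS1, Set.mem_image, Set.mem_setOf_eq]
    constructor
    · rintro ⟨⟨i, c⟩, ⟨hmem, hdvd⟩, heq⟩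
      obtain ⟨rfl, rfl⟩ : bead Y i = t ∧ gap Y c = s :=
        ⟨congrArg Prod.fst heq, congrArg Prod.snd heq⟩
      refine ⟨bead_mem_maya Y i, gap_not_mem_maya Y c, ?_, ?_⟩
      · exact (gap_lt_bead_iff Y i c).2 (YoungDiagram.mem_iff_lt_rowLen.1 hmem)
      · rw [← hookLen_int Y hmem]
        exact_mod_cast Int.natCast_dvd_natCast.2 hdvd
    · rintro ⟨ht, hs, hst, hdvd⟩
      obtain ⟨i, rfl⟩ := ht
      have hsr : s ∈ Set.range (gap Y) := by
        by_contra h; exact hs ((mem_mayaOf_iff Y s).2 h)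
      obtain ⟨c, rfl⟩ := hsr
      have hlt : gap Y c < bead Y i := hst
      have hmem : (i, c) ∈ Y :=
        YoungDiagram.mem_iff_lt_rowLen.2 ((gap_lt_bead_iff Y i c).1 hlt)
      refine ⟨(i, c), ⟨hmem, ?_⟩, rfl⟩
      have : (M:ℤ) ∣ (hookLen Y (i, c) : ℤ) := by
        rw [hookLen_int Y hmem]; exact hdvd
      exact_mod_cast this
  -- second bijection
  set H : ℤ × ℤ → ℕ × (ℤ × ℤ) :=
    fun p => ((p.1.emod M).toNat, (p.1.ediv M, p.2.ediv M)) with hH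
  have hrecon : ∀ a : ℤ, (M:ℤ) * (a.ediv M) + a.emod M = a := fun a =>
    Int.mul_ediv_add_emod a M
  have hemod_eq : ∀ p : ℤ × ℤ, p ∈ S1 → p.2.emod M = p.1.emod M := by
    rintro ⟨t, s⟩ ⟨_, _, _, hdvd⟩
    exact Int.modEq_iff_dvd.mpr hdvd
  have hHinj : Set.InjOn H S1 := by
    rintro ⟨t, s⟩ hp ⟨t', s'⟩ hp' heq
    simp only [hH, Prod.mk.injEq] at heq
    obtain ⟨h1, h2, h3⟩ := heq
    have hm0 : 0 ≤ t.emod M := Int.emod_nonneg t (by omega)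
    have hm0' : 0 ≤ t'.emod M := Int.emod_nonneg t' (by omega)
    have hmeq : t.emod M = t'.emod M := by omega
    have he1 := hemod_eq _ hp
    have he2 := hemod_eq _ hp'
    have ht : t = t' := by
      rw [← hrecon t, ← hrecon t', h2, hmeq]
    have hs : s = s' := by
      have hse : s.emod M = s'.emod M := by rw [he1, he2, hmeq]
      rw [← hrecon s, ← hrecon s', h3, hse]
    simp [ht, hs]
  have him2 : H '' S1
      = ⋃ j ∈ Finset.range M, (fun x => (j, x)) '' Pset j := by
    ext ⟨j, q, q'⟩
    simp only [Set.mem_image, Set.mem_iUnion, Finset.mem_range, hPset,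
      Set.mem_setOf_eq]
    constructor
    · rintro ⟨⟨t, s⟩, ⟨ht, hs, hst, hdvd⟩, heq⟩
      simp only [hH, Prod.mk.injEq] at heq
      obtain ⟨h1, h2, h3⟩ := heq
      have hm0 : 0 ≤ t.emod M := Int.emod_nonneg t (by omega)
      have hmlt : t.emod M < M := Int.emod_lt_of_pos t (by omega)
      have hjt : (j : ℤ) = t.emod M := by omega
      have he := hemod_eq (t, s) ⟨ht, hs, hst, hdvd⟩
      have htq : t = (M:ℤ) * q + j := by
        rw [hjt, ← h2]; exact (hrecon t).symm
      have hsq : s = (M:ℤ) * q' + j := by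
        rw [hjt, ← he, ← h3]; exact (hrecon s).symm
      refine ⟨j, by omega, (q, q'), ⟨?_, ?_, ?_⟩, rfl⟩
      · show (M:ℤ) * q + j ∈ mayaOf Y; rwa [← htq]
      · show (M:ℤ) * q' + j ∉ mayaOf Y; rwa [← hsq]
      · have h4 : (M:ℤ) * q' + j < (M:ℤ) * q + j := by rw [← htq, ← hsq]; exact hst
        have h5 : (M:ℤ) * q' < (M:ℤ) * q := by omega
        exact lt_of_mul_lt_mul_left h5 (by omega)
    · rintro ⟨j0, hj0, ⟨p, p'⟩, ⟨hp, hp', hplt⟩, heq⟩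
      simp only [Prod.mk.injEq] at heq
      obtain ⟨e1, e2, e3⟩ := heq
      subst e1; subst e2; subst e3
      replace hplt : p' < p := hplt
      have hmul : (M:ℤ) * p' < (M:ℤ) * p :=
        mul_lt_mul_of_pos_left hplt (by omega)
      refine ⟨((M:ℤ) * p + j0, (M:ℤ) * p' + j0), ⟨hp, hp', by omega, ?_⟩, ?_⟩
      · exact ⟨p - p', by ring⟩
      · have hmod : ∀ a : ℤ, ((M:ℤ) * a + j0).emod M = j0 := by
          intro a
          show ((M:ℤ) * a + j0) % M = j0
          rw [add_comm, Int.add_mul_emod_self_left]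
          exact Int.emod_eq_of_lt (by omega) (by exact_mod_cast hj0)
        have hdiv : ∀ a : ℤ, ((M:ℤ) * a + j0).ediv M = a := by
          intro a
          have h1 := hrecon ((M:ℤ) * a + j0)
          have h2 := hmod a
          have h3 : (M:ℤ) * (((M:ℤ) * a + j0).ediv M) = (M:ℤ) * a := by omega
          exact mul_left_cancel₀ (by omega) h3
        simp [hH, hmod, hdiv]
  -- per-runner counts
  have hAf : ∀ j, ∀ t : ℤ, {u : ℤ | u ∈ runner M Y j ∧ t < u}.Finite :=
    fun j t => runner_above_finite M hM Y j t
  have hBf : ∀ j, ∀ t : ℤ, {s : ℤ | s ∉ runner M Y j ∧ s < t}.Finite :=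
    fun j t => runner_below_compl_finite M hM Y j t
  have hper : ∀ j, (Pset j).ncard = quotientSize M Y j := by
    intro j
    rw [hPset]
    exact pairs_ncard_eq (runner M Y j) (hAf j) (hBf j)
  calc (Y.cells.filter fun c => M ∣ hookLen Y c).card
      = S0.ncard := hL
    _ = (F1 '' S0).ncard := (Set.ncard_image_of_injOn hF1inj).symm
    _ = S1.ncard := by rw [him1]
    _ = (H '' S1).ncard := (Set.ncard_image_of_injOn hHinj).symm
    _ = (⋃ j ∈ Finset.range M, (fun x => (j, x)) '' Pset j : Set (ℕ × (ℤ × ℤ))).ncard := by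
        rw [him2]
    _ = ∑ j ∈ Finset.range M, (Pset j).ncard :=
        ncard_sigma Pset (fun j => pairs_finite _ (hAf j) (hBf j)) M
    _ = ∑ j ∈ Finset.range M, quotientSize M Y j := by
        exact Finset.sum_congr rfl fun j _ => hper j
end

section
/- A partition λ has equal numbers of boxes in each content residue class mod M (i.e., #{(i,j) ∈ λ : j - i ≡ r (mod M)} is independent of r) if and only if λ is M-core-free, i.e., the M-core of λ is the empty partition. -/
open Finset PowerSeries

/-! Row `i` of `Y` has contents `-i, …, βᵢ`, where `βᵢ = λᵢ - i - 1` is its beta-number, so it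
contributes `[βᵢ ≡ r] - [-i - 1 ≡ r]` to the difference between the numbers of cells of content
`≡ r` and of content `≡ r + 1`. Summed over the rows this is exactly the charge of runner `r` of the
`M`-abacus. Hence the contents are balanced iff every runner has charge zero. The charges sum to
zero, and the core, obtained by pushing the beads down each runner, is `{z < 0}` (the empty
partition) when all charges vanish; otherwise some runner of negative charge has a hole below a bead
of a runner of positive charge. -/

def contentCount (M : ℕ) (Y : YoungDiagram) (r : ZMod M) : ℕ :=
  #(Y.cells.filter fun c => ((c.2 : ZMod M) - (c.1 : ZMod M)) = r)

def betaNumber (Y : YoungDiagram) (i : ℕ) : ℤ :=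
  (Y.rowLen i : ℤ) - i - 1

namespace YoungDiagram

theorem rowLen_eq_zero_of_colLen_le (Y : YoungDiagram) {i : ℕ} (h : Y.colLen 0 ≤ i) :
    Y.rowLen i = 0 := by
  by_contra hne
  exact h.not_gt (mem_iff_lt_colLen.1 (mem_iff_lt_rowLen.2 (Nat.pos_of_ne_zero hne)))

theorem cells_eq_biUnion_row (Y : YoungDiagram) :
    Y.cells = (range (Y.colLen 0)).biUnion Y.row := by
  ext c
  simp only [mem_biUnion, mem_range, mem_row_iff, mem_cells]
  refine ⟨fun hc => ⟨c.1, ?_, hc, rfl⟩, fun ⟨_, _, hc, _⟩ => hc⟩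
  exact mem_iff_lt_colLen.1 (Y.up_left_mem le_rfl (Nat.zero_le c.2) hc)

theorem sum_cells {β : Type*} [AddCommMonoid β] (Y : YoungDiagram) (f : ℕ × ℕ → β) :
    ∑ c ∈ Y.cells, f c = ∑ i ∈ range (Y.colLen 0), ∑ j ∈ range (Y.rowLen i), f (i, j) := by
  rw [cells_eq_biUnion_row, sum_biUnion]
  · simp only [row_eq_prod, singleton_product, sum_map, Function.Embedding.coeFn_mk]
  · intro i _ k _ hik
    simp only [Function.onFun, disjoint_left, mem_row_iff]
    exact fun c hi hk => hik (hi.2.symm.trans hk.2)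

end YoungDiagram

theorem sum_range_ite_sub_ite_add_one {R : Type*} [AddCommGroupWithOne R] [DecidableEq R]
    (b r : R) (L : ℕ) :
    ∑ j ∈ range L, ((if (j : R) - b = r then (1 : ℤ) else 0) - if (j : R) - b = r + 1 then 1 else 0)
      = (if (L : R) - b - 1 = r then 1 else 0) - if -b - 1 = r then 1 else 0 := by
  convert sum_range_sub (fun j : ℕ => if (j : R) - b - 1 = r then (1 : ℤ) else 0) L
    using 3 with j
  · push_cast
    rw [add_sub_right_comm, add_sub_cancel_right]
  · exact if_congr sub_eq_iff_eq_add.symm rfl rfl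
  · simp

theorem contentCount_sub_contentCount_add_one (M : ℕ) (Y : YoungDiagram) (r : ZMod M) :
    (contentCount M Y r : ℤ) - contentCount M Y (r + 1)
      = ∑ i ∈ range (Y.colLen 0), ((if ((betaNumber Y i : ℤ) : ZMod M) = r then 1 else 0)
          - if ((-(i : ℤ) - 1 : ℤ) : ZMod M) = r then 1 else 0) := by
  simp only [contentCount, natCast_card_filter, ← sum_sub_distrib, YoungDiagram.sum_cells]
  refine sum_congr rfl fun i _ => ?_
  rw [sum_range_ite_sub_ite_add_one]
  simp [betaNumber]

theorem betaNumber_strictAnti (Y : YoungDiagram) : StrictAnti (betaNumber Y) := fun i k hik => by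
  have := Y.rowLen_anti i k hik.le
  simp only [betaNumber]
  omega

theorem mayaOf_eq_union (Y : YoungDiagram) :
    mayaOf Y = ↑((range (Y.colLen 0)).image (betaNumber Y)) ∪ Set.Iio (-(Y.colLen 0 : ℤ)) := by
  ext t
  simp only [mayaOf, Set.mem_range, Set.mem_union, coe_image, coe_range, Set.mem_image,
    Set.mem_Iio]
  constructor
  · rintro ⟨i, rfl⟩
    by_cases hi : i < Y.colLen 0
    · exact Or.inl ⟨i, hi, rfl⟩
    · rw [Y.rowLen_eq_zero_of_colLen_le (not_lt.1 hi)]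
      omega
  · rintro (⟨i, -, rfl⟩ | ht)
    · exact ⟨i, rfl⟩
    · refine ⟨(-t - 1).toNat, ?_⟩
      rw [Y.rowLen_eq_zero_of_colLen_le (by omega)]
      omega

theorem neg_colLen_le_betaNumber (Y : YoungDiagram) {i : ℕ} (hi : i < Y.colLen 0) :
    -(Y.colLen 0 : ℤ) ≤ betaNumber Y i := by
  simp only [betaNumber]
  omega

theorem Ico_neg_zero_eq_image (n : ℕ) :
    Ico (-(n : ℤ)) 0 = (range n).image fun i : ℕ => -(i : ℤ) - 1 := by
  ext t
  simp only [mem_Ico, mem_image, mem_range]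
  refine ⟨fun ht => ⟨(-t - 1).toNat, by omega, by omega⟩, ?_⟩
  rintro ⟨i, hi, rfl⟩
  omega

theorem ncard_sub_ncard_union_Iio (B : Finset ℤ) (n : ℕ) (hB : ∀ b ∈ B, -(n : ℤ) ≤ b)
    (P : ℤ → Prop) [DecidablePred P] :
    ({t | t ∈ (B : Set ℤ) ∪ Set.Iio (-n) ∧ 0 ≤ t ∧ P t}.ncard : ℤ)
        - {t | t ∉ (B : Set ℤ) ∪ Set.Iio (-n) ∧ t < 0 ∧ P t}.ncard
      = #(B.filter P) - #((Ico (-(n : ℤ)) 0).filter P) := by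
  have hbeads : {t | t ∈ (B : Set ℤ) ∪ Set.Iio (-n) ∧ 0 ≤ t ∧ P t}
      = ↑((B.filter P).filter (0 ≤ ·)) := by
    ext t
    simp only [Set.mem_ofPred_eq, Set.mem_union, mem_coe, Set.mem_Iio, coe_filter, mem_filter]
    constructor
    · rintro ⟨hB | hn, h0, hP⟩
      · exact ⟨⟨hB, hP⟩, h0⟩
      · omega
    · exact fun ⟨⟨hB, hP⟩, h0⟩ => ⟨Or.inl hB, h0, hP⟩
  have hholes : {t | t ∉ (B : Set ℤ) ∪ Set.Iio (-n) ∧ t < 0 ∧ P t}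
      = ↑(((Ico (-(n : ℤ)) 0).filter P).filter (· ∉ B)) := by
    ext t
    simp only [Set.mem_ofPred_eq, Set.mem_union, mem_coe, Set.mem_Iio, coe_filter, mem_filter,
      mem_Ico, not_or, not_lt]
    tauto
  have hneg : (B.filter P).filter (¬ 0 ≤ ·) = ((Ico (-(n : ℤ)) 0).filter P).filter (· ∈ B) := by
    ext t
    simp only [mem_filter, mem_Ico, not_le]
    exact ⟨fun ⟨⟨hB', hP⟩, h0⟩ => ⟨⟨⟨hB t hB', h0⟩, hP⟩, hB'⟩,
      fun ⟨⟨⟨_, h0⟩, hP⟩, hB'⟩ => ⟨⟨hB', hP⟩, h0⟩⟩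
  have hsplitB := card_filter_add_card_filter_not (s := B.filter P) (0 ≤ ·)
  have hsplitI := card_filter_add_card_filter_not (s := (Ico (-(n : ℤ)) 0).filter P) (· ∈ B)
  rw [hbeads, hholes, Set.ncard_coe_finset, Set.ncard_coe_finset]
  rw [hneg] at hsplitB
  omega

theorem mayaPart_Iio (k : ℤ) (i : ℕ) : mayaPart (Set.Iio k) i = 0 := by
  have hempty : {t : ℤ | t ∉ Set.Iio k ∧ i + 1 ≤ countAbove (Set.Iio k) t} = ∅ := by
    refine Set.eq_empty_of_forall_notMem fun t ⟨ht, hcount⟩ => ?_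
    have : {u : ℤ | u ∈ Set.Iio k ∧ t < u} = ∅ :=
      Set.eq_empty_of_forall_notMem fun u ⟨hu, htu⟩ => ht (htu.trans hu)
    rw [countAbove, this, Set.ncard_empty] at hcount
    omega
  rw [mayaPart, hempty, Set.ncard_empty]

theorem mayaPart_zero_pos {T : Set ℤ} (hT : BddAbove T) (hTc : BddBelow Tᶜ) {t u : ℤ}
    (ht : t ∉ T) (hu : u ∈ T) (htu : t < u) : 0 < mayaPart T 0 := by
  obtain ⟨b, hb⟩ := hT
  obtain ⟨a, ha⟩ := hTc
  have hcount : 0 < countAbove T t :=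
    (Set.ncard_pos ((Set.finite_Icc t b).subset fun v hv => ⟨hv.2.le, hb hv.1⟩)).2 ⟨u, hu, htu⟩
  have hfin : {s : ℤ | s ∉ T ∧ 0 + 1 ≤ countAbove T s}.Finite := by
    refine (Set.finite_Icc a b).subset fun s ⟨hs, hs1⟩ => ⟨ha hs, ?_⟩
    obtain ⟨v, hv, hsv⟩ := Set.nonempty_of_ncard_ne_zero (Nat.one_le_iff_ne_zero.1 hs1)
    exact hsv.le.trans (hb hv)
  exact (Set.ncard_pos hfin).2 ⟨t, ht, hcount⟩

section Abacus

variable {M : ℕ} [NeZero M]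

theorem ediv_mul_add_val (q : ℤ) (r : ZMod M) : ((M : ℤ) * q + r.val) / M = q := by
  have hM : (M : ℤ) ≠ 0 := by exact_mod_cast NeZero.ne M
  rw [add_comm, Int.add_mul_ediv_left _ _ hM,
    Int.ediv_eq_zero_of_lt (by positivity) (by exact_mod_cast r.val_lt), zero_add]

theorem intCast_mul_add_val (q : ℤ) (r : ZMod M) : (((M : ℤ) * q + r.val : ℤ) : ZMod M) = r := by
  simp

theorem charge_setOf_mul_add_val_mem (T : Set ℤ) (r : ZMod M) :
    charge {q : ℤ | (M : ℤ) * q + (r.val : ℤ) ∈ T}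
      = ({t | t ∈ T ∧ 0 ≤ t ∧ (t : ZMod M) = r}.ncard : ℤ)
        - {t | t ∉ T ∧ t < 0 ∧ (t : ZMod M) = r}.ncard := by
  have hM : (0 : ℤ) < M := by exact_mod_cast Nat.pos_of_neZero M
  set f : ℤ → ℤ := fun q => M * q + r.val
  have hf : f.Injective := fun q q' h => mul_left_cancel₀ hM.ne' (add_right_cancel h)
  have hrange (P : ℤ → Prop) : {t | P t ∧ (t : ZMod M) = r} ⊆ Set.range f := fun t ht =>
    ⟨t / M, by
      change (M : ℤ) * (t / M) + (r.val : ℤ) = t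
      rw [← ht.2, ZMod.val_intCast]
      exact Int.mul_ediv_add_emod t M⟩
  have hsign (q : ℤ) : 0 ≤ q ↔ 0 ≤ f q := by
    have := r.val_lt
    constructor <;> intro h <;> simp only [f] at * <;> nlinarith
  have hbeads : {q | q ∈ {q : ℤ | (M : ℤ) * q + (r.val : ℤ) ∈ T} ∧ 0 ≤ q}
      = f ⁻¹' {t | (t ∈ T ∧ 0 ≤ t) ∧ (t : ZMod M) = r} := by
    ext q
    simp only [Set.mem_ofPred_eq, Set.mem_preimage, f, intCast_mul_add_val, and_true, ← hsign]
  have hholes : {q | q ∉ {q : ℤ | (M : ℤ) * q + (r.val : ℤ) ∈ T} ∧ q < 0}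
      = f ⁻¹' {t | (t ∉ T ∧ t < 0) ∧ (t : ZMod M) = r} := by
    ext q
    simp only [Set.mem_ofPred_eq, Set.mem_preimage, f, intCast_mul_add_val, and_true, ← not_le,
      ← hsign]
  rw [charge, hbeads, hholes, Set.ncard_preimage_of_injective_subset_range hf (hrange _),
    Set.ncard_preimage_of_injective_subset_range hf (hrange _)]
  simp only [and_assoc]

theorem mayaPart_setOf_ediv_lt_pos (c : ZMod M → ℤ) {a b : ZMod M} (ha : c a < 0) (hb : 0 < c b) :
    0 < mayaPart {z : ℤ | z / M < c z} 0 := by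
  have hM : (0 : ℤ) < M := by exact_mod_cast Nat.pos_of_neZero M
  obtain ⟨B, hB⟩ := Finite.exists_le c
  obtain ⟨C, hC⟩ := Finite.exists_ge c
  refine mayaPart_zero_pos (t := M * c a + a.val) (u := M * (c b - 1) + b.val)
    ⟨M * B, fun z hz => ?_⟩ ⟨C * M, fun z hz => ?_⟩ ?_ ?_ ?_
  · exact ((Int.ediv_lt_iff_lt_mul hM).1 (lt_of_lt_of_le hz (hB _))).le.trans (by rw [mul_comm])
  · exact (Int.le_ediv_iff_mul_le hM).1 ((hC _).trans (not_lt.1 hz))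
  · rw [Set.mem_ofPred_eq, intCast_mul_add_val, ediv_mul_add_val]
    exact lt_irrefl _
  · rw [Set.mem_ofPred_eq, intCast_mul_add_val, ediv_mul_add_val]
    exact sub_one_lt _
  · have := a.val_lt
    nlinarith

theorem setOf_ediv_lt_zero : {z : ℤ | z / M < 0} = Set.Iio 0 := by
  ext z
  rw [Set.mem_ofPred_eq, Int.ediv_lt_iff_lt_mul (by exact_mod_cast Nat.pos_of_neZero M), zero_mul]
  rfl

theorem forall_mayaPart_setOf_ediv_lt_eq_zero_iff {c : ZMod M → ℤ} (hc : ∑ r, c r = 0) :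
    (∀ i, mayaPart {z : ℤ | z / M < c z} i = 0) ↔ ∀ r, c r = 0 := by
  refine ⟨fun h => ?_, fun h i => ?_⟩
  · by_contra! hne
    obtain ⟨b, -, hb⟩ := exists_pos_of_sum_zero_of_exists_nonzero (s := univ) c hc
      (by simpa using hne)
    obtain ⟨a, -, ha⟩ := exists_pos_of_sum_zero_of_exists_nonzero (s := univ)
      (fun r => -c r) (by simp [hc]) (by simpa using hne)
    exact (mayaPart_setOf_ediv_lt_pos c (neg_pos.1 ha) hb).ne' (h 0)
  · simp only [h, setOf_ediv_lt_zero, mayaPart_Iio]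

end Abacus

theorem coreMaya_eq {M : ℕ} [NeZero M] (Y : YoungDiagram) :
    coreMaya M Y = {z : ℤ | z / M < charge (runner M Y (z : ZMod M).val)} := by
  ext z
  change z / (M : ℤ) < charge (runner M Y (z % (M : ℤ)).toNat) ↔ _
  rw [← ZMod.val_intCast, Int.toNat_natCast, Set.mem_ofPred_eq]

theorem charge_runner (M : ℕ) [NeZero M] (Y : YoungDiagram) (r : ZMod M) :
    charge (runner M Y r.val)
      = ∑ i ∈ range (Y.colLen 0), ((if ((betaNumber Y i : ℤ) : ZMod M) = r then 1 else 0)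
          - if ((-(i : ℤ) - 1 : ℤ) : ZMod M) = r then 1 else 0) := by
  rw [runner, charge_setOf_mul_add_val_mem, mayaOf_eq_union, ncard_sub_ncard_union_Iio _ _
    (by simpa using fun i hi => neg_colLen_le_betaNumber Y hi), Ico_neg_zero_eq_image,
    natCast_card_filter, natCast_card_filter, sum_image (betaNumber_strictAnti Y).injective.injOn,
    sum_image fun i _ k _ h => by simpa using h, sum_sub_distrib]

theorem sum_charge_runner (M : ℕ) [NeZero M] (Y : YoungDiagram) :
    ∑ r : ZMod M, charge (runner M Y r.val) = 0 := by
  simp only [charge_runner, sum_comm (s := univ), sum_sub_distrib, sum_ite_eq, mem_univ,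
    if_true, sub_self]

theorem contentCount_sub_contentCount_add_one_eq_charge (M : ℕ) [NeZero M] (Y : YoungDiagram)
    (r : ZMod M) :
    (contentCount M Y r : ℤ) - contentCount M Y (r + 1) = charge (runner M Y r.val) := by
  rw [contentCount_sub_contentCount_add_one, charge_runner]

theorem ZMod.forall_apply_eq_iff_forall_apply_add_one {M : ℕ} [NeZero M] {α : Type*}
    (f : ZMod M → α) : (∀ r s, f r = f s) ↔ ∀ r, f r = f (r + 1) := by
  refine ⟨fun h r => h r (r + 1), fun h r s => ?_⟩
  have hshift (k : ℕ) : f r = f (r + k) := by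
    induction k with
    | zero => simp
    | succ k ih => rw [ih, h, Nat.cast_succ, add_assoc]
  rw [hshift (s - r).val, ZMod.natCast_zmod_val, add_sub_cancel]

/-- a partition (Young diagram) `Y` has equal numbers of boxes in each
content residue class mod `M` (the content of the cell `(i,j)` being `j - i`) if and
only if its `M`-core is the empty partition. -/
theorem balanced_contents_iff_empty_core (M : ℕ) (hM : 0 < M) (Y : YoungDiagram) :
    (∀ r s : ZMod M,
        (Y.cells.filter fun c => ((c.2 : ZMod M) - (c.1 : ZMod M)) = r).card
          = (Y.cells.filter fun c => ((c.2 : ZMod M) - (c.1 : ZMod M)) = s).card)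
      ↔ ∀ i, corePart M Y i = 0 := by
  have : NeZero M := ⟨hM.ne'⟩
  change (∀ r s, contentCount M Y r = contentCount M Y s) ↔ ∀ i, mayaPart (coreMaya M Y) i = 0
  rw [coreMaya_eq, forall_mayaPart_setOf_ediv_lt_eq_zero_iff (sum_charge_runner M Y),
    ZMod.forall_apply_eq_iff_forall_apply_add_one]
  refine forall_congr' fun r => ?_
  rw [← contentCount_sub_contentCount_add_one_eq_charge]
  omega
end
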